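/- For positive definite matrices Σ₀ and Σ_f, among all n×n real matrices S such that the block matrix [[Σ₀, S],[Sᵀ, Σ_f]] is positive semidefinite, the quantity trace(Σ₀ + Σ_f − 2S) is minimized uniquely at S = Σ₀^{1/2}(Σ₀^{1/2} Σ_f Σ₀^{1/2})^{1/2} Σ₀^{-1/2}, with minimum value trace(Σ₀ + Σ_f − 2(Σ₀^{1/2} Σ_f Σ₀^{1/2})^{1/2}). -/

import Mathlib

/-!
Write `A = Σ₀^{1/2}` and `B = (A Σ_f A)^{1/2}`. By the Schur complement, `S` is feasible iff
`B² - TᵀT ⪰ 0` for `T = A⁻¹ S A`, and `tr T = tr S`. For such `T`,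
`2 (tr B - tr T) = tr ((T - B) B⁻¹ (T - B)ᵀ) + tr (B⁻¹ (B² - TᵀT))`,
a sum of two nonnegative traces, the first of which vanishes only at `T = B`, i.e. `S = A B A⁻¹`.
-/

set_option autoImplicit false
open Matrix
noncomputable section

namespace Matrix.PosSemidef

/-- The positive semidefinite square root (the definition of the older Mathlib). -/
noncomputable def sqrt {m : Type*} [Fintype m] [DecidableEq m]
    {A : Matrix m m ℝ} (hA : A.PosSemidef) : Matrix m m ℝ :=
  hA.1.eigenvectorUnitary.1 * diagonal ((√·) ∘ hA.1.eigenvalues) *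
    (star hA.1.eigenvectorUnitary : Matrix m m ℝ)

theorem posSemidef_sqrt {m : Type*} [Fintype m] [DecidableEq m]
    {A : Matrix m m ℝ} (hA : A.PosSemidef) : hA.sqrt.PosSemidef := by
  have hd : (diagonal ((√·) ∘ hA.1.eigenvalues : m → ℝ)).PosSemidef :=
    PosSemidef.diagonal (fun i => Real.sqrt_nonneg _)
  have := hd.mul_mul_conjTranspose_same (hA.1.eigenvectorUnitary : Matrix m m ℝ)
  unfold sqrt
  simpa [Matrix.star_eq_conjTranspose] using this

end Matrix.PosSemidef

/-- The middle matrix `Σ₀^{1/2} Σf Σ₀^{1/2}` is positive semidefinite. -/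
theorem midPosSemidef {n : ℕ} {S0 Sf : Matrix (Fin n) (Fin n) ℝ}
    (h0 : S0.PosDef) (hf : Sf.PosDef) :
    (h0.posSemidef.sqrt * Sf * h0.posSemidef.sqrt).PosSemidef := by
  have h := hf.posSemidef.mul_mul_conjTranspose_same h0.posSemidef.sqrt
  rwa [h0.posSemidef.posSemidef_sqrt.isHermitian] at h

/-- The optimal coupling matrix `S = Σ₀^{1/2}(Σ₀^{1/2}ΣfΣ₀^{1/2})^{1/2}Σ₀^{-1/2}`. -/
noncomputable def Sopt {n : ℕ} {S0 Sf : Matrix (Fin n) (Fin n) ℝ}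
    (h0 : S0.PosDef) (hf : Sf.PosDef) : Matrix (Fin n) (Fin n) ℝ :=
  h0.posSemidef.sqrt * (midPosSemidef h0 hf).sqrt * (h0.posSemidef.sqrt)⁻¹

namespace Matrix

theorem PosSemidef.transpose_eq_self {m : Type*} {A : Matrix m m ℝ} (hA : A.PosSemidef) :
    Aᵀ = A :=
  (isHermitian_iff_isSymm.mp hA.isHermitian).eq

variable {m : Type*} [Fintype m] [DecidableEq m]

namespace PosSemidef

theorem sqrt_mul_self {A : Matrix m m ℝ} (hA : A.PosSemidef) : hA.sqrt * hA.sqrt = A := by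
  set U : Matrix m m ℝ := (hA.1.eigenvectorUnitary : Matrix m m ℝ)
  set R := diagonal ((√·) ∘ hA.1.eigenvalues)
  have hUU : star U * U = 1 := Unitary.coe_star_mul_self _
  have hRR : R * R = diagonal hA.1.eigenvalues := by
    rw [diagonal_mul_diagonal]
    exact congrArg diagonal (funext fun i => Real.mul_self_sqrt (hA.eigenvalues_nonneg i))
  calc hA.sqrt * hA.sqrt = U * R * (star U * U) * R * star U := by
        simp only [sqrt, U, R, Matrix.mul_assoc]
    _ = U * diagonal hA.1.eigenvalues * star U := by
        rw [hUU, Matrix.mul_one, Matrix.mul_assoc U R R, hRR]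
    _ = A := by
        conv_rhs => rw [hA.1.spectral_theorem, Unitary.conjStarAlgAut_apply]
        rfl

theorem trace_mul_nonneg {A B : Matrix m m ℝ} (hA : A.PosSemidef) (hB : B.PosSemidef) :
    0 ≤ (A * B).trace := by
  set R := hA.sqrt
  have h := hB.mul_mul_conjTranspose_same R
  rw [conjTranspose_eq_transpose_of_trivial, hA.posSemidef_sqrt.transpose_eq_self] at h
  calc 0 ≤ (R * B * R).trace := h.trace_nonneg
    _ = (R * R * B).trace := by rw [trace_mul_cycle, trace_mul_comm]
    _ = (A * B).trace := by rw [hA.sqrt_mul_self]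

end PosSemidef

namespace PosDef

theorem posDef_sqrt {A : Matrix m m ℝ} (hA : A.PosDef) : hA.posSemidef.sqrt.PosDef := by
  refine hA.posSemidef.posSemidef_sqrt.posDef_iff_isUnit.mpr ?_
  have h := hA.isUnit
  rw [← hA.posSemidef.sqrt_mul_self, isUnit_iff_isUnit_det, det_mul] at h
  exact (isUnit_iff_isUnit_det _).mpr (isUnit_of_mul_isUnit_left h)

theorem eq_zero_of_trace_mul_mul_transpose_eq_zero {P : Matrix m m ℝ} (hP : P.PosDef)
    {D : Matrix m m ℝ} (h : (D * P * Dᵀ).trace = 0) : D = 0 := by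
  set R := hP.posSemidef.sqrt
  have hDR : D * R = 0 := by
    rw [← trace_mul_conjTranspose_self_eq_zero_iff, conjTranspose_eq_transpose_of_trivial,
      transpose_mul, hP.posSemidef.posSemidef_sqrt.transpose_eq_self, ← Matrix.mul_assoc,
      Matrix.mul_assoc D, hP.posSemidef.sqrt_mul_self]
    exact h
  exact (IsUnit.mul_left_eq_zero hP.posDef_sqrt.isUnit).mp hDR

theorem trace_le_of_posSemidef_mul_self_sub {B T : Matrix m m ℝ} (hB : B.PosDef)
    (h : (B * B - Tᵀ * T).PosSemidef) :
    T.trace ≤ B.trace ∧ (T.trace = B.trace → T = B) := by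
  have hBi : B⁻¹.PosDef := hB.inv
  have hdet := (isUnit_iff_isUnit_det B).mp hB.isUnit
  have hBinvB : B⁻¹ * B = 1 := nonsing_inv_mul B hdet
  have hBBinv : B * B⁻¹ = 1 := mul_nonsing_inv B hdet
  have hgap : 0 ≤ (B⁻¹ * (B * B - Tᵀ * T)).trace := hBi.posSemidef.trace_mul_nonneg h
  have hsq : 0 ≤ ((T - B) * B⁻¹ * (T - B)ᵀ).trace := by
    have := hBi.posSemidef.mul_mul_conjTranspose_same (T - B)
    rw [conjTranspose_eq_transpose_of_trivial] at this
    exact this.trace_nonneg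
  have hsum : ((T - B) * B⁻¹ * (T - B)ᵀ).trace + (B⁻¹ * (B * B - Tᵀ * T)).trace
      = 2 * (B.trace - T.trace) := by
    have hcyc : (T * B⁻¹ * Tᵀ).trace = (B⁻¹ * (Tᵀ * T)).trace := by
      rw [trace_mul_cycle, trace_mul_comm]
    rw [transpose_sub, hB.posSemidef.transpose_eq_self]
    simp only [Matrix.sub_mul, Matrix.mul_sub, Matrix.mul_assoc, hBinvB, hBBinv, Matrix.mul_one,
      ← Matrix.mul_assoc B⁻¹ B, Matrix.one_mul, trace_sub, trace_transpose]
    rw [← Matrix.mul_assoc, hcyc]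
    ring
  refine ⟨by linarith, fun heq => ?_⟩
  exact sub_eq_zero.mp (hBi.eq_zero_of_trace_mul_mul_transpose_eq_zero (by linarith))

theorem posSemidef_fromBlocks_mul_self_iff {A : Matrix m m ℝ} (hA : A.PosDef)
    (S D : Matrix m m ℝ) :
    (fromBlocks (A * A) S Sᵀ D).PosSemidef ↔
      (A * D * A - (A⁻¹ * S * A)ᵀ * (A⁻¹ * S * A)).PosSemidef := by
  have hAt : Aᵀ = A := hA.posSemidef.transpose_eq_self
  have hAA : (A * A).PosDef := by
    simpa [conjTranspose_eq_transpose_of_trivial, hAt] using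
      PosDef.mul_conjTranspose_self A (vecMul_injective_iff_isUnit.mpr hA.isUnit)
  have : Invertible (A * A) := hAA.isUnit.invertible
  have hconj : A * (D - Sᵀ * (A * A)⁻¹ * S) * A
      = A * D * A - (A⁻¹ * S * A)ᵀ * (A⁻¹ * S * A) := by
    simp only [transpose_mul, transpose_nonsing_inv, hAt, mul_inv_rev, Matrix.mul_sub,
      Matrix.sub_mul, Matrix.mul_assoc]
  have hU := hA.isUnit.posSemidef_star_right_conjugate_iff (x := D - Sᵀ * (A * A)⁻¹ * S)
  rw [star_eq_conjTranspose, conjTranspose_eq_transpose_of_trivial, hAt, hconj] at hU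
  rw [hU, ← conjTranspose_eq_transpose_of_trivial]
  exact hAA.fromBlocks₁₁ S D

end PosDef

end Matrix

theorem Matrix.trace_add_sub_two_nsmul {m : Type*} [Fintype m] (P Q X : Matrix m m ℝ) :
    (P + Q - 2 • X).trace = P.trace + Q.trace - 2 * X.trace := by
  rw [trace_sub, trace_add, trace_smul, nsmul_eq_mul, Nat.cast_ofNat]

section Coupling

variable {n : ℕ} {S0 Sf : Matrix (Fin n) (Fin n) ℝ} (h0 : S0.PosDef) (hf : Sf.PosDef)

theorem posDef_sqrt_mid : (midPosSemidef h0 hf).sqrt.PosDef := by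
  have hA := h0.posDef_sqrt
  have hM : (h0.posSemidef.sqrt * Sf * h0.posSemidef.sqrt).PosDef := by
    simpa [conjTranspose_eq_transpose_of_trivial, hA.posSemidef.transpose_eq_self] using
      hf.mul_mul_conjTranspose_same (vecMul_injective_iff_isUnit.mpr hA.isUnit)
  exact hM.posDef_sqrt

theorem trace_Sopt : (Sopt h0 hf).trace = (midPosSemidef h0 hf).sqrt.trace := by
  have hdet := (isUnit_iff_isUnit_det _).mp h0.posDef_sqrt.isUnit
  rw [Sopt, trace_mul_cycle, nonsing_inv_mul _ hdet, Matrix.one_mul]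

theorem posSemidef_fromBlocks_iff_sqrt_mid (S : Matrix (Fin n) (Fin n) ℝ) :
    (fromBlocks S0 S Sᵀ Sf).PosSemidef ↔
      ((midPosSemidef h0 hf).sqrt * (midPosSemidef h0 hf).sqrt -
        (h0.posSemidef.sqrt⁻¹ * S * h0.posSemidef.sqrt)ᵀ *
          (h0.posSemidef.sqrt⁻¹ * S * h0.posSemidef.sqrt)).PosSemidef := by
  rw [(midPosSemidef h0 hf).sqrt_mul_self]
  simpa only [h0.posSemidef.sqrt_mul_self] using
    h0.posDef_sqrt.posSemidef_fromBlocks_mul_self_iff S Sf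

theorem posSemidef_fromBlocks_Sopt :
    (fromBlocks S0 (Sopt h0 hf) (Sopt h0 hf)ᵀ Sf).PosSemidef := by
  have hdet := (isUnit_iff_isUnit_det _).mp h0.posDef_sqrt.isUnit
  have hT : h0.posSemidef.sqrt⁻¹ * Sopt h0 hf * h0.posSemidef.sqrt =
      (midPosSemidef h0 hf).sqrt := by
    simp only [Sopt, Matrix.mul_assoc, nonsing_inv_mul _ hdet, Matrix.mul_one,
      nonsing_inv_mul_cancel_left _ _ hdet]
  rw [posSemidef_fromBlocks_iff_sqrt_mid h0 hf, hT,
    (posDef_sqrt_mid h0 hf).posSemidef.transpose_eq_self, sub_self]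
  exact PosSemidef.zero

theorem trace_le_trace_Sopt {S : Matrix (Fin n) (Fin n) ℝ}
    (hS : (fromBlocks S0 S Sᵀ Sf).PosSemidef) :
    S.trace ≤ (Sopt h0 hf).trace ∧ (S.trace = (Sopt h0 hf).trace → S = Sopt h0 hf) := by
  set A := h0.posSemidef.sqrt
  have hdet := (isUnit_iff_isUnit_det _).mp h0.posDef_sqrt.isUnit
  obtain ⟨hle, heq⟩ := (posDef_sqrt_mid h0 hf).trace_le_of_posSemidef_mul_self_sub
    ((posSemidef_fromBlocks_iff_sqrt_mid h0 hf S).mp hS)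
  have hT : (A⁻¹ * S * A).trace = S.trace := by
    rw [trace_mul_cycle, mul_nonsing_inv _ hdet, Matrix.one_mul]
  rw [trace_Sopt, ← hT]
  refine ⟨hle, fun h => ?_⟩
  rw [Sopt, ← heq h]
  simp only [Matrix.mul_assoc, mul_nonsing_inv _ hdet, Matrix.mul_one,
    mul_nonsing_inv_cancel_left _ _ hdet]

end Coupling

/-- among all `S` with `[[Σ₀, S],[Sᵀ, Σf]] ⪰ 0`,
`trace(Σ₀ + Σf − 2S)` is uniquely minimized at `Sopt`, with minimum value
`trace(Σ₀ + Σf − 2(Σ₀^{1/2}ΣfΣ₀^{1/2})^{1/2})`. -/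
theorem stmt1 {n : ℕ} (S0 Sf : Matrix (Fin n) (Fin n) ℝ)
    (h0 : S0.PosDef) (hf : Sf.PosDef) :
    (Matrix.fromBlocks S0 (Sopt h0 hf) (Sopt h0 hf)ᵀ Sf).PosSemidef ∧
    (∀ S : Matrix (Fin n) (Fin n) ℝ,
      (Matrix.fromBlocks S0 S Sᵀ Sf).PosSemidef →
        (S0 + Sf - 2 • Sopt h0 hf).trace ≤ (S0 + Sf - 2 • S).trace ∧
        ((S0 + Sf - 2 • S).trace = (S0 + Sf - 2 • Sopt h0 hf).trace → S = Sopt h0 hf)) ∧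
    (S0 + Sf - 2 • Sopt h0 hf).trace
      = (S0 + Sf - 2 • (midPosSemidef h0 hf).sqrt).trace := by
  refine ⟨posSemidef_fromBlocks_Sopt h0 hf, fun S hS => ?_, ?_⟩
  · obtain ⟨hle, heq⟩ := trace_le_trace_Sopt h0 hf hS
    simp only [trace_add_sub_two_nsmul]
    exact ⟨by linarith, fun h => heq (by linarith)⟩
  · rw [trace_add_sub_two_nsmul, trace_add_sub_two_nsmul, trace_Sopt]
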